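/- arXiv:1211.1714 — 3 statements merged into one kernel-verified Lean document; each statement's English description precedes it below -/
import Mathlib

section
/- For every natural number k ≥ 0, the minimum number of vertices on a path in P^k connecting two distinct 2-valent vertices of P^k equals 4^{k+1}. -/
/-!
Each edge `uv` of `G` becomes a cross edge between the copies of `P` at `u` and at `v`, attached
to ports (the 2-valent vertices 4, 6, 7 of `P`), and any two vertices of `P` are at distance at
most 3. So copies at distance `d` are joined by a walk of length `4d + 3`: at most 3 steps inside
each of the `d + 1` copies and `d` cross edges.

A vertex of degree 2 only uses the ports 4 and 6, so the vertex 7 of its copy stays 2-valent, and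
for two such vertices `w₁, w₂` the bound `4 d(w₁, w₂) + 3` is attained: the potential
`4 d(u, w₂) + d_P(i, ports of u leading toward w₂)` on vertices `(u, i)` drops by at most one
along every edge. Thus the 2-valent vertices of `Pᵏ⁺¹` lie over those of `Pᵏ`, and
`dist + 1` is multiplied by 4 in each round, starting from `3 + 1 = 4` in `P`.
-/

open SimpleGraph

/-- Degree of a vertex, via the cardinality of its neighbor set. -/
noncomputable def hdeg {V : Type*} (G : SimpleGraph V) (v : V) : ℕ :=
  {w | G.Adj v w}.ncard

/-- A cubic graph: every vertex has degree 3. -/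
def IsCubic {V : Type*} (G : SimpleGraph V) : Prop := ∀ v, hdeg G v = 3

/-- A 2-connected graph: at least 3 vertices and deleting any vertex leaves it connected. -/
def TwoConnected {V : Type*} (G : SimpleGraph V) : Prop :=
  3 ≤ Nat.card V ∧ ∀ v : V, (G.induce {v}ᶜ).Connected

/-- A 3-connected graph: at least 4 vertices and deleting any two vertices leaves it connected. -/
def ThreeConnected {V : Type*} (G : SimpleGraph V) : Prop :=
  4 ≤ Nat.card V ∧ ∀ v w : V, v ≠ w → (G.induce ({v, w} : Set V)ᶜ).Connected

/-- Edge list of the Petersen graph on `Fin 10` (vertex 9 has neighbors 4, 6, 7). -/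
def petEdges : List (Fin 10 × Fin 10) :=
  [(0,1),(1,2),(2,3),(3,4),(4,0),(0,5),(1,6),(2,7),(3,8),(4,9),(5,7),(7,9),(9,6),(6,8),(8,5)]

/-- The Petersen graph `P₁₀`. -/
def Pet : SimpleGraph (Fin 10) := SimpleGraph.fromRel (fun a b => (a, b) ∈ petEdges)

/-- Edge list of `P = P₁₀ - z` on `Fin 9` (where `z` was vertex 9);
its three 2-valent vertices are 4, 6, 7. -/
def pEdges : List (Fin 9 × Fin 9) :=
  [(0,1),(1,2),(2,3),(3,4),(4,0),(0,5),(1,6),(2,7),(3,8),(5,7),(6,8),(8,5)]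

/-- The graph `P = P₁₀ - z`, the Petersen graph minus one vertex. -/
def Pgr : SimpleGraph (Fin 9) := SimpleGraph.fromRel (fun a b => (a, b) ∈ pEdges)

/-- The three 2-valent vertices of `P` (as targets of the port assignment). -/
def portIdx : ℕ → Fin 9
  | 0 => 4
  | 1 => 6
  | _ => 7

/-- Port assignment: to which 2-valent vertex of the copy of `P` replacing `u` the
neighbor `v` of `u` gets attached (neighbors are ordered by the injective encoding `enc`). -/
noncomputable def port {V : Type*} (G : SimpleGraph V) (enc : V → ℕ) (u v : V) : Fin 9 :=
  portIdx (Nat.card {w : V | G.Adj u w ∧ enc w < enc v})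

/-- Simultaneous `P`-inflation at every vertex of `G`. -/
noncomputable def inflate {V : Type*} (G : SimpleGraph V) (enc : V → ℕ) :
    SimpleGraph (V × Fin 9) where
  Adj a b :=
    (a.1 = b.1 ∧ Pgr.Adj a.2 b.2) ∨
    (G.Adj a.1 b.1 ∧ a.2 = port G enc a.1 b.1 ∧ b.2 = port G enc b.1 a.1)
  symm := by
    constructor
    rintro a b (⟨h1, h2⟩ | ⟨h1, h2, h3⟩)
    · exact Or.inl ⟨h1.symm, h2.symm⟩
    · exact Or.inr ⟨h1.symm, h3, h2⟩
  loopless := by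
    constructor
    rintro a (⟨-, h⟩ | ⟨h, -, -⟩)
    · exact Pgr.irrefl h
    · exact G.irrefl h

/-- A graph bundled with an injective-style encoding of its vertices into `ℕ`. -/
structure GE where
  V : Type
  G : SimpleGraph V
  enc : V → ℕ

/-- One round of simultaneous `P`-inflation. -/
noncomputable def step (A : GE) : GE :=
  ⟨A.V × Fin 9, inflate A.G A.enc, fun p => Nat.pair (A.enc p.1) p.2.val⟩

/-- The iterated Petersen graph `P₁₀ᵏ`. -/
noncomputable def ItP10 : ℕ → GE
  | 0 => ⟨Fin 10, Pet, Fin.val⟩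
  | k + 1 => step (ItP10 k)

/-- The iterated graph `Pᵏ` (starting from `P = P₁₀ - z`). -/
noncomputable def ItP : ℕ → GE
  | 0 => ⟨Fin 9, Pgr, Fin.val⟩
  | k + 1 => step (ItP k)

/-- The canonical copy of `P^{k-1}` in `P₁₀ᵏ` containing a given vertex,
recorded by the corresponding vertex of `P₁₀`. -/
noncomputable def baseOf : (k : ℕ) → (ItP10 k).V → Fin 10
  | 0 => id
  | k + 1 => fun p => baseOf k p.1

/-- The parameter `l(G)`: minimum over circuits `C` of the maximum over vertices `v`
of the distance `d(C, v)`. -/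
noncomputable def ell {V : Type*} (G : SimpleGraph V) : ℕ :=
  sInf { n | ∃ (v : V) (w : G.Walk v v), w.IsCycle ∧ ∀ u : V, ∃ x ∈ w.support, G.dist x u ≤ n }

/-- `M` is a matching of `G`: a set of edges of `G`, pairwise not sharing a vertex. -/
def IsMatchingSet {V : Type*} (G : SimpleGraph V) (M : Set (Sym2 V)) : Prop :=
  M ⊆ G.edgeSet ∧ ∀ e ∈ M, ∀ f ∈ M, e ≠ f → ∀ v : V, ¬(v ∈ e ∧ v ∈ f)

/-- Every connected component of `H` has an even number of vertices. -/
def EvenComponents {V : Type*} (H : SimpleGraph V) : Prop :=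
  ∀ c : H.ConnectedComponent, Even c.supp.ncard

/-- An `f`-matching: a matching `M` such that every component of `G - M` is
2-connected and has an even number of vertices. -/
def IsFMatching {V : Type*} (G : SimpleGraph V) (M : Set (Sym2 V)) : Prop :=
  IsMatchingSet G M ∧
    ∀ c : (G.deleteEdges M).ConnectedComponent,
      TwoConnected ((G.deleteEdges M).induce c.supp) ∧ Even c.supp.ncard

/-- A minimal edge cut of `G`: deleting it disconnects `G`, but deleting any
proper subset does not. -/
def IsMinEdgeCut {V : Type*} (G : SimpleGraph V) (E : Set (Sym2 V)) : Prop :=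
  E ⊆ G.edgeSet ∧ ¬(G.deleteEdges E).Connected ∧
    ∀ F : Set (Sym2 V), F ⊂ E → (G.deleteEdges F).Connected

/-- `H` is a subdivision of `F`: the vertices of `F` embed into `H` and each edge of `F`
corresponds to a path in `H`, the paths being internally disjoint and covering `H`. -/
def IsSubdivisionOf {W U : Type*} (H : SimpleGraph W) (F : SimpleGraph U) : Prop :=
  ∃ f : U ↪ W, ∃ p : ∀ u v : U, F.Adj u v → H.Walk (f u) (f v),
    (∀ u v h, (p u v h).IsPath) ∧
    (∀ u v h, ∀ w ∈ (p u v h).support, w ∈ Set.range f → w = f u ∨ w = f v) ∧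
    (∀ e : Sym2 W, e ∈ H.edgeSet ↔ ∃ u v h, e ∈ (p u v h).edges) ∧
    (∀ w : W, w ∈ Set.range f ∨ ∃ u v h, w ∈ (p u v h).support) ∧
    (∀ u v h u' v' h', ∀ w : W,
      w ∈ (p u v h).support → w ∈ (p u' v' h').support →
      w ∈ Set.range f ∨ (u = u' ∧ v = v') ∨ (u = v' ∧ v = u'))

/-- Each component of `F` is an even circuit or a 2-connected cubic graph. -/
def GoodFrameComponents {U : Type*} (F : SimpleGraph U) : Prop :=
  ∀ c : F.ConnectedComponent,
    ((F.induce c.supp).Connected ∧ (∀ v, hdeg (F.induce c.supp) v = 2) ∧ Even c.supp.ncard) ∨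
    (TwoConnected (F.induce c.supp) ∧ IsCubic (F.induce c.supp))

/-- `F` is a frame of `G`. -/
def IsFrame {U V : Type*} (F : SimpleGraph U) (G : SimpleGraph V) : Prop :=
  GoodFrameComponents F ∧
    ∃ H : SimpleGraph V, H ≤ G ∧ IsSubdivisionOf H F ∧ EvenComponents H

/-- A proper 3-edge-coloring of `G`. -/
def ProperEdgeColoring {V : Type*} (G : SimpleGraph V) (f : Sym2 V → Fin 3) : Prop :=
  ∀ u v w : V, G.Adj u v → G.Adj u w → v ≠ w → f s(u, v) ≠ f s(u, w)

/-- The spanning subgraph of edges whose color is different from `c`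
(i.e. the union of the other two color classes). -/
def twoClassSub {V : Type*} (G : SimpleGraph V) (f : Sym2 V → Fin 3) (c : Fin 3) :
    SimpleGraph V where
  Adj u v := G.Adj u v ∧ f s(u, v) ≠ c
  symm := by
    constructor
    rintro u v ⟨h1, h2⟩
    exact ⟨h1.symm, by rwa [Sym2.eq_swap]⟩
  loopless := ⟨fun v h => G.irrefl h.1⟩

/-- A Kotzig graph: a cubic graph with a proper 3-edge-coloring in which any two
color classes form a hamiltonian circuit. -/
def IsKotzig {V : Type*} (G : SimpleGraph V) : Prop :=
  IsCubic G ∧ ∃ f : Sym2 V → Fin 3, ProperEdgeColoring G f ∧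
    ∀ c : Fin 3, (twoClassSub G f c).Connected ∧ ∀ v, hdeg (twoClassSub G f c) v = 2

/-- The family `Fam` is an even subdivision-factor of `G`. -/
def IsEvenSubdivFactor {ι : Type*} (Fam : ι → Σ n : ℕ, SimpleGraph (Fin n))
    {V : Type*} (G : SimpleGraph V) : Prop :=
  ∃ H : SimpleGraph V, H ≤ G ∧ ∀ c : H.ConnectedComponent,
    Even c.supp.ncard ∧ ∃ i, IsSubdivisionOf (H.induce c.supp) (Fam i).2

section Walks
variable {W : Type*} {H : SimpleGraph W}

lemma le_add_dist_of_lipschitz (f : W → ℕ) (hf : ∀ a b, H.Adj a b → f a ≤ f b + 1)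
    {a b : W} (hr : H.Reachable a b) : f a ≤ f b + H.dist a b := by
  obtain ⟨p, hp⟩ := hr.exists_walk_length_eq_dist
  rw [← hp]
  clear hp hr
  induction p with
  | nil => simp
  | cons h _ ih =>
    have := hf _ _ h
    rw [Walk.length_cons]
    omega

lemma exists_walk_length_le_of_descent (f : W → ℕ) {b : W} (h0 : ∀ a, f a = 0 → a = b)
    (hdesc : ∀ a, f a ≠ 0 → ∃ a', H.Adj a a' ∧ f a' + 1 = f a) (a : W) :
    ∃ p : H.Walk a b, p.length ≤ f a := by
  induction hn : f a generalizing a with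
  | zero =>
    obtain rfl := h0 a hn
    exact ⟨.nil, Nat.zero_le _⟩
  | succ n ih =>
    obtain ⟨a', hadj, ha'⟩ := hdesc a (by omega)
    obtain ⟨p, hp⟩ := ih a' (by omega)
    exact ⟨.cons hadj p, by rw [Walk.length_cons]; omega⟩

lemma exists_adj_dist_add_one_eq {u w : W} (hr : H.Reachable u w) (hne : u ≠ w) :
    ∃ x, H.Adj u x ∧ H.dist x w + 1 = H.dist u w := by
  obtain ⟨p, hp⟩ := hr.exists_walk_length_eq_dist
  cases p with
  | nil => exact absurd rfl hne
  | @cons _ x _ hux p =>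
    refine ⟨x, hux, le_antisymm ?_ ?_⟩
    · rw [← hp, Walk.length_cons]
      exact Nat.succ_le_succ (dist_le p)
    · calc H.dist u w ≤ H.dist u x + H.dist x w := hux.reachable.dist_triangle_left w
        _ = H.dist x w + 1 := by rw [dist_eq_one_iff_adj.2 hux, add_comm]

end Walks

lemma pgr_adj_iff (a b : Fin 9) :
    Pgr.Adj a b ↔ a ≠ b ∧ ((a, b) ∈ pEdges ∨ (b, a) ∈ pEdges) := Iff.rfl

instance : DecidableRel Pgr.Adj := fun a b => decidable_of_iff _ (pgr_adj_iff a b).symm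

def pgrPorts : Finset (Fin 9) := {4, 6, 7}

lemma hdeg_pgr (i : Fin 9) : hdeg Pgr i = if i ∈ pgrPorts then 2 else 3 := by
  rw [hdeg, Set.ncard_eq_toFinset_card', Set.toFinset_ofPred]
  revert i
  decide

/-- The distance matrix of `P`, as a certificate: `pgr_dist_eq` checks it. -/
def pgrDistTable : Fin 9 → Fin 9 → ℕ :=
  ![![0, 1, 2, 2, 1, 1, 2, 2, 2],
    ![1, 0, 1, 2, 2, 2, 1, 2, 2],
    ![2, 1, 0, 1, 2, 2, 2, 1, 2],
    ![2, 2, 1, 0, 1, 2, 2, 2, 1],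
    ![1, 2, 2, 1, 0, 2, 3, 3, 2],
    ![1, 2, 2, 2, 2, 0, 2, 1, 1],
    ![2, 1, 2, 2, 3, 2, 0, 3, 1],
    ![2, 2, 1, 2, 3, 1, 3, 0, 2],
    ![2, 2, 2, 1, 2, 1, 1, 2, 0]]

lemma exists_pgr_walk_length_le (i j : Fin 9) :
    ∃ p : Pgr.Walk i j, p.length ≤ pgrDistTable i j := by
  refine exists_walk_length_le_of_descent (fun a => pgrDistTable a j) ?_ ?_ i
  all_goals
    revert j
    decide

lemma pgr_connected : Pgr.Connected :=
  (connected_iff_exists_forall_reachable Pgr).2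
    ⟨0, fun j => (exists_pgr_walk_length_le 0 j).elim fun p _ => p.reachable⟩

lemma pgr_dist_eq (i j : Fin 9) : Pgr.dist i j = pgrDistTable i j := by
  refine le_antisymm ?_ ?_
  · obtain ⟨p, hp⟩ := exists_pgr_walk_length_le i j
    exact (dist_le p).trans hp
  · have h0 : ∀ j, pgrDistTable j j = 0 := by decide
    have hlip := le_add_dist_of_lipschitz (fun a => pgrDistTable a j)
      (by revert j; decide) (pgr_connected.preconnected i j)
    simpa [h0] using hlip

lemma pgr_dist_le_three (i j : Fin 9) : Pgr.dist i j ≤ 3 := by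
  rw [pgr_dist_eq]
  revert i j
  decide

lemma pgr_dist_eq_three {i j : Fin 9} (hi : i ∈ pgrPorts) (hj : j ∈ pgrPorts) (hij : i ≠ j) :
    Pgr.dist i j = 3 := by
  rw [pgr_dist_eq]
  revert i j
  decide

lemma portIdx_mem_pgrPorts (n : ℕ) : portIdx n ∈ pgrPorts := by
  unfold portIdx; split <;> decide

lemma portIdx_injOn : Set.InjOn portIdx (Set.Iio 3) := by
  intro n hn m hm
  simp only [Set.mem_Iio] at hn hm
  interval_cases n <;> interval_cases m <;> decide

section Ports
variable {V : Type*} (G : SimpleGraph V) (enc : V → ℕ)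

noncomputable def nbrRank (u v : V) : ℕ := Nat.card {w : V | G.Adj u w ∧ enc w < enc v}

lemma port_eq_portIdx_nbrRank (u v : V) : port G enc u v = portIdx (nbrRank G enc u v) := rfl

lemma port_mem_pgrPorts (u v : V) : port G enc u v ∈ pgrPorts := portIdx_mem_pgrPorts _

variable [Finite V] {G enc}

lemma nbrRank_lt_hdeg {u v : V} (h : G.Adj u v) : nbrRank G enc u v < hdeg G u := by
  rw [nbrRank, Nat.card_coe_set_eq, hdeg]
  exact Set.ncard_lt_ncard ⟨fun w hw => hw.1, fun hsub => (hsub h).2.false⟩ (Set.toFinite _)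

lemma nbrRank_lt_nbrRank {u v w : V} (hv : G.Adj u v) (hlt : enc v < enc w) :
    nbrRank G enc u v < nbrRank G enc u w := by
  rw [nbrRank, nbrRank, Nat.card_coe_set_eq, Nat.card_coe_set_eq]
  exact Set.ncard_lt_ncard ⟨fun x hx => ⟨hx.1, hx.2.trans hlt⟩,
    fun hsub => (hsub ⟨hv, hlt⟩).2.false⟩ (Set.toFinite _)

lemma nbrRank_injOn (hinj : Function.Injective enc) (u : V) :
    Set.InjOn (nbrRank G enc u) (G.neighborSet u) := by
  intro v hv w hw h
  rcases lt_trichotomy (enc v) (enc w) with hlt | heq | hlt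
  · exact absurd h (nbrRank_lt_nbrRank hv hlt).ne
  · exact hinj heq
  · exact absurd h (nbrRank_lt_nbrRank hw hlt).ne'

lemma exists_adj_nbrRank_eq (hinj : Function.Injective enc) {u : V} {r : ℕ}
    (hr : r < hdeg G u) : ∃ v, G.Adj u v ∧ nbrRank G enc u v = r := by
  let f : G.neighborSet u → Fin (hdeg G u) := fun v => ⟨nbrRank G enc u v, nbrRank_lt_hdeg v.2⟩
  have hf : f.Bijective := by
    refine (Nat.bijective_iff_injective_and_card f).2 ⟨fun v w h => ?_, ?_⟩
    · exact Subtype.ext (nbrRank_injOn hinj u v.2 w.2 (congrArg Fin.val h))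
    · rw [Nat.card_fin, hdeg, ← Nat.card_coe_set_eq]
      rfl
  obtain ⟨⟨v, hv⟩, hfv⟩ := hf.2 ⟨r, hr⟩
  exact ⟨v, hv, congrArg Fin.val hfv⟩

lemma exists_adj_port_eq (hinj : Function.Injective enc) {u : V} {n : ℕ}
    (hn : n < hdeg G u) : ∃ v, G.Adj u v ∧ port G enc u v = portIdx n := by
  obtain ⟨v, hv, hr⟩ := exists_adj_nbrRank_eq hinj hn
  exact ⟨v, hv, by rw [port_eq_portIdx_nbrRank, hr]⟩

lemma port_injOn (hinj : Function.Injective enc) {u : V} (h3 : hdeg G u ≤ 3) :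
    Set.InjOn (port G enc u) (G.neighborSet u) := fun _ hv _ hw h =>
  nbrRank_injOn hinj u hv hw <| portIdx_injOn ((nbrRank_lt_hdeg hv).trans_le h3)
    ((nbrRank_lt_hdeg hw).trans_le h3) h

lemma port_ne_seven {u v : V} (h2 : hdeg G u ≤ 2) (hv : G.Adj u v) : port G enc u v ≠ 7 := by
  have hr := (nbrRank_lt_hdeg (enc := enc) hv).trans_le h2
  rw [port_eq_portIdx_nbrRank]
  interval_cases nbrRank G enc u v <;> decide

end Ports

section Inflate
variable {V : Type*} (G : SimpleGraph V) (enc : V → ℕ)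

def copyHom (u : V) : Pgr →g inflate G enc := ⟨fun i => (u, i), fun h => Or.inl ⟨rfl, h⟩⟩

variable {G enc}

lemma inflate_adj_port {u x : V} (h : G.Adj u x) :
    (inflate G enc).Adj (u, port G enc u x) (x, port G enc x u) :=
  Or.inr ⟨h, rfl, rfl⟩

lemma exists_walk_in_copy (u : V) (i j : Fin 9) :
    ∃ q : (inflate G enc).Walk (u, i) (u, j), q.length = Pgr.dist i j := by
  obtain ⟨p, hp⟩ := pgr_connected.exists_walk_length_eq_dist i j
  exact ⟨p.map (copyHom G enc u), (Walk.length_map _ _).trans hp⟩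

lemma exists_inflate_walk {u v : V} (p : G.Walk u v) (i j : Fin 9) :
    ∃ q : (inflate G enc).Walk (u, i) (v, j), q.length ≤ 4 * p.length + 3 := by
  induction p generalizing i with
  | nil =>
    obtain ⟨q, hq⟩ := exists_walk_in_copy (enc := enc) _ i j
    exact ⟨q, hq ▸ pgr_dist_le_three i j⟩
  | @cons a x _ h p ih =>
    obtain ⟨q₁, hq₁⟩ := exists_walk_in_copy (enc := enc) a i (port G enc a x)
    obtain ⟨q₂, hq₂⟩ := ih (port G enc x a)
    refine ⟨q₁.append (.cons (inflate_adj_port h) q₂), ?_⟩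
    have := pgr_dist_le_three i (port G enc a x)
    simp only [Walk.length_append, Walk.length_cons]
    omega

lemma inflate_connected (hG : G.Connected) : (inflate G enc).Connected := by
  have : Nonempty V := hG.nonempty
  refine (connected_iff _).2 ⟨fun a b => ?_, inferInstance⟩
  obtain ⟨p⟩ := hG a.1 b.1
  obtain ⟨q, -⟩ := exists_inflate_walk (enc := enc) p a.2 b.2
  exact q.reachable

lemma inflate_dist_le (hG : G.Connected) (u v : V) (i j : Fin 9) :
    (inflate G enc).dist (u, i) (v, j) ≤ 4 * G.dist u v + 3 := by
  obtain ⟨p, hp⟩ := hG.exists_walk_length_eq_dist u v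
  obtain ⟨q, hq⟩ := exists_inflate_walk (enc := enc) p i j
  exact (dist_le q).trans (hp ▸ hq)

variable [Finite V]

lemma hdeg_inflate (u : V) (i : Fin 9) :
    hdeg (inflate G enc) (u, i) = hdeg Pgr i + {x | G.Adj u x ∧ port G enc u x = i}.ncard := by
  have hnbr : {b | (inflate G enc).Adj (u, i) b} =
      (fun j => (u, j)) '' {j | Pgr.Adj i j} ∪
        (fun x => (x, port G enc x u)) '' {x | G.Adj u x ∧ port G enc u x = i} := by
    ext ⟨x, j⟩
    simp only [inflate, Set.mem_ofPred_eq, Set.mem_union, Set.mem_image, Prod.mk.injEq]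
    grind
  have hdisj : Disjoint ((fun j => (u, j)) '' {j | Pgr.Adj i j})
      ((fun x => (x, port G enc x u)) '' {x | G.Adj u x ∧ port G enc u x = i}) := by
    rw [Set.disjoint_left]
    rintro _ ⟨j, -, rfl⟩ ⟨x, hx, hxu⟩
    exact G.ne_of_adj hx.1 (congrArg Prod.fst hxu).symm
  rw [hdeg, hnbr, Set.ncard_union_eq hdisj (Set.toFinite _) (Set.toFinite _),
    Set.ncard_image_of_injective _ (Prod.mk_right_injective u), hdeg,
    Set.ncard_image_of_injective _ fun x y h => congrArg Prod.fst h]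

lemma hdeg_inflate_of_port_ne {u : V} {i : Fin 9} (h : ∀ x, G.Adj u x → port G enc u x ≠ i) :
    hdeg (inflate G enc) (u, i) = hdeg Pgr i := by
  have hempty : {x | G.Adj u x ∧ port G enc u x = i} = ∅ :=
    Set.eq_empty_of_forall_notMem fun x hx => h x hx.1 hx.2
  rw [hdeg_inflate, hempty, Set.ncard_empty, add_zero]

lemma hdeg_inflate_of_port_eq (hinj : Function.Injective enc) {u x : V} {i : Fin 9}
    (h3 : hdeg G u ≤ 3) (hx : G.Adj u x) (hi : port G enc u x = i) :
    hdeg (inflate G enc) (u, i) = hdeg Pgr i + 1 := by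
  rw [hdeg_inflate, Set.ncard_eq_one.2 ⟨x, ?_⟩]
  ext y
  exact ⟨fun hy => port_injOn hinj h3 hy.1 hx (hy.2.trans hi.symm), fun hy => hy ▸ ⟨hx, hi⟩⟩

lemma hdeg_inflate_seven {u : V} (h2 : hdeg G u ≤ 2) : hdeg (inflate G enc) (u, 7) = 2 := by
  rw [hdeg_inflate_of_port_ne fun x hx => port_ne_seven h2 hx, hdeg_pgr]
  rfl

lemma hdeg_inflate_eq_three (hinj : Function.Injective enc) {u : V} {i : Fin 9}
    (h2 : 2 ≤ hdeg G u) (h3 : hdeg G u ≤ 3) (h7 : i = 7 → hdeg G u = 3) :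
    hdeg (inflate G enc) (u, i) = 3 := by
  by_cases hi : i ∈ pgrPorts
  · obtain ⟨n, hn, rfl⟩ : ∃ n < hdeg G u, portIdx n = i := by
      simp only [pgrPorts, Finset.mem_insert, Finset.mem_singleton] at hi
      rcases hi with rfl | rfl | rfl
      exacts [⟨0, by omega, rfl⟩, ⟨1, by omega, rfl⟩, ⟨2, by omega, rfl⟩]
    obtain ⟨x, hx, hport⟩ := exists_adj_port_eq hinj hn
    rw [hdeg_inflate_of_port_eq hinj h3 hx hport, hdeg_pgr, if_pos (portIdx_mem_pgrPorts n)]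
  · have hport : ∀ x, G.Adj u x → port G enc u x ≠ i := fun x _ h =>
      hi (h ▸ port_mem_pgrPorts G enc u x)
    rw [hdeg_inflate_of_port_ne hport, hdeg_pgr, if_neg hi]

end Inflate

noncomputable def pgrInfDist (T : Set (Fin 9)) (i : Fin 9) : ℕ := sInf (Pgr.dist i '' T)

section PgrInfDist
variable {T : Set (Fin 9)} {i : Fin 9}

lemma pgrInfDist_eq_zero (hi : i ∈ T) : pgrInfDist T i = 0 :=
  Nat.eq_zero_of_le_zero (Nat.sInf_le ⟨i, hi, dist_self⟩)

lemma exists_pgrInfDist_eq (hT : T.Nonempty) (i : Fin 9) :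
    ∃ t ∈ T, pgrInfDist T i = Pgr.dist i t :=
  let ⟨t, ht, h⟩ := Nat.sInf_mem (hT.image (Pgr.dist i))
  ⟨t, ht, h.symm⟩

lemma pgrInfDist_le_three (hT : T.Nonempty) (i : Fin 9) : pgrInfDist T i ≤ 3 := by
  obtain ⟨t, -, h⟩ := exists_pgrInfDist_eq hT i
  exact h ▸ pgr_dist_le_three i t

lemma pgrInfDist_eq_three (hT : T.Nonempty) (hTP : T ⊆ pgrPorts) (hi : i ∈ pgrPorts)
    (hiT : i ∉ T) : pgrInfDist T i = 3 := by
  obtain ⟨t, ht, h⟩ := exists_pgrInfDist_eq hT i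
  rw [h, pgr_dist_eq_three hi (hTP ht) fun hit => hiT (hit ▸ ht)]

lemma pgrInfDist_le_of_adj (hT : T.Nonempty) {i' : Fin 9} (h : Pgr.Adj i i') :
    pgrInfDist T i ≤ pgrInfDist T i' + 1 := by
  obtain ⟨t, ht, heq⟩ := exists_pgrInfDist_eq hT i'
  calc pgrInfDist T i ≤ Pgr.dist i t := Nat.sInf_le ⟨t, ht, rfl⟩
    _ ≤ Pgr.dist i i' + Pgr.dist i' t := pgr_connected.dist_triangle
    _ = pgrInfDist T i' + 1 := by rw [dist_eq_one_iff_adj.2 h, heq, add_comm]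

end PgrInfDist

section LowerBound
variable {V : Type*} (G : SimpleGraph V) (enc : V → ℕ)

/-- The ports of the copy of `u` whose cross edges lead one step closer to `w`; the copy of `w`
gets the port `7` instead. -/
def portsToward (w u : V) : Set (Fin 9) :=
  {i | (u = w ∧ i = 7) ∨ ∃ x, G.Adj u x ∧ G.dist x w + 1 = G.dist u w ∧ port G enc u x = i}

noncomputable def potential (w : V) (a : V × Fin 9) : ℕ :=
  4 * G.dist a.1 w + pgrInfDist (portsToward G enc w a.1) a.2

variable {G enc}

lemma portsToward_nonempty (hG : G.Connected) (w u : V) : (portsToward G enc w u).Nonempty := by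
  by_cases h : u = w
  · exact ⟨7, Or.inl ⟨h, rfl⟩⟩
  · obtain ⟨x, hx, hd⟩ := exists_adj_dist_add_one_eq (hG u w) h
    exact ⟨_, Or.inr ⟨x, hx, hd, rfl⟩⟩

lemma portsToward_subset (w u : V) : portsToward G enc w u ⊆ pgrPorts := by
  rintro i (⟨-, rfl⟩ | ⟨x, -, -, rfl⟩)
  · decide
  · exact port_mem_pgrPorts G enc u x

lemma port_not_mem_portsToward [Finite V] (hinj : Function.Injective enc) {w u x : V}
    (h3 : hdeg G x ≤ 3) (hw : ∀ y, G.Adj w y → port G enc w y ≠ 7) (hxu : G.Adj x u)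
    (hd : G.dist u w + 1 ≠ G.dist x w) : port G enc x u ∉ portsToward G enc w x := by
  rintro (⟨rfl, h7⟩ | ⟨y, hy, hyd, hport⟩)
  · exact hw u hxu h7
  · obtain rfl := port_injOn hinj h3 hy hxu hport
    exact hd hyd

/-- Along a cross edge between two copies equally far from `w`, both ends are at distance `3`
from the ports toward `w`; this is why the potential never drops by more than one. -/
lemma potential_le_of_adj [Finite V] (hinj : Function.Injective enc) (hG : G.Connected)
    (h3 : ∀ v, hdeg G v ≤ 3) {w : V} (hw : ∀ y, G.Adj w y → port G enc w y ≠ 7)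
    (a b : V × Fin 9) (hab : (inflate G enc).Adj a b) :
    potential G enc w a ≤ potential G enc w b + 1 := by
  obtain ⟨u, i⟩ := a
  obtain ⟨x, j⟩ := b
  change (u = x ∧ Pgr.Adj i j) ∨ (G.Adj u x ∧ i = port G enc u x ∧ j = port G enc x u) at hab
  rcases hab with ⟨rfl, hij⟩ | ⟨hux, rfl, rfl⟩
  · have := pgrInfDist_le_of_adj (portsToward_nonempty (enc := enc) hG w u) hij
    simp only [potential]
    omega
  · have hx3 : G.dist u w + 1 ≠ G.dist x w →
        pgrInfDist (portsToward G enc w x) (port G enc x u) = 3 := fun hd =>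
      pgrInfDist_eq_three (portsToward_nonempty hG w x) (portsToward_subset w x)
        (port_mem_pgrPorts G enc x u) (port_not_mem_portsToward hinj (h3 x) hw hux.symm hd)
    have hu0 : G.dist x w + 1 = G.dist u w →
        pgrInfDist (portsToward G enc w u) (port G enc u x) = 0 := fun hd =>
      pgrInfDist_eq_zero (Or.inr ⟨x, hux, hd, rfl⟩)
    have hu3 := pgrInfDist_le_three (portsToward_nonempty (enc := enc) hG w u) (port G enc u x)
    have hdu : G.dist u w ≤ G.dist u x + G.dist x w := hG.dist_triangle
    have hdx : G.dist x w ≤ G.dist x u + G.dist u w := hG.dist_triangle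
    rw [dist_eq_one_iff_adj.2 hux] at hdu
    rw [dist_eq_one_iff_adj.2 hux.symm] at hdx
    simp only [potential]
    omega

lemma le_inflate_dist [Finite V] (hinj : Function.Injective enc) (hG : G.Connected)
    (h3 : ∀ v, hdeg G v ≤ 3) {w₁ w₂ : V} (hne : w₁ ≠ w₂) (h₁ : hdeg G w₁ ≤ 2)
    (h₂ : hdeg G w₂ ≤ 2) : 4 * G.dist w₁ w₂ + 3 ≤ (inflate G enc).dist (w₁, 7) (w₂, 7) := by
  have hlip := le_add_dist_of_lipschitz (potential G enc w₂)
    (potential_le_of_adj hinj hG h3 fun y hy => port_ne_seven h₂ hy)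
    ((inflate_connected hG).preconnected (w₁, 7) (w₂, 7))
  have hstart : pgrInfDist (portsToward G enc w₂ w₁) 7 = 3 := by
    refine pgrInfDist_eq_three (portsToward_nonempty hG w₂ w₁) (portsToward_subset w₂ w₁)
      (by decide) ?_
    rintro (⟨h, -⟩ | ⟨x, hx, -, h⟩)
    exacts [hne h, port_ne_seven h₁ hx h]
  have hend : pgrInfDist (portsToward G enc w₂ w₂) 7 = 0 := pgrInfDist_eq_zero (Or.inl ⟨rfl, rfl⟩)
  simp only [potential, dist_self] at hlip
  omega

lemma inflate_dist_seven [Finite V] (hinj : Function.Injective enc) (hG : G.Connected)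
    (h3 : ∀ v, hdeg G v ≤ 3) {w₁ w₂ : V} (hne : w₁ ≠ w₂) (h₁ : hdeg G w₁ ≤ 2)
    (h₂ : hdeg G w₂ ≤ 2) : (inflate G enc).dist (w₁, 7) (w₂, 7) = 4 * G.dist w₁ w₂ + 3 :=
  (inflate_dist_le hG w₁ w₂ 7 7).antisymm (le_inflate_dist hinj hG h3 hne h₁ h₂)

end LowerBound

def twoValent : (k : ℕ) → Fin 3 → (ItP k).V
  | 0 => (![4, 6, 7] : Fin 3 → Fin 9)
  | k + 1 => fun a => (twoValent k a, 7)

structure IsGoodIterate (k : ℕ) : Prop where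
  finite : Finite (ItP k).V
  enc_injective : Function.Injective (ItP k).enc
  connected : (ItP k).G.Connected
  hdeg_twoValent : ∀ a, hdeg (ItP k).G (twoValent k a) = 2
  hdeg_of_notMem : ∀ v ∉ Set.range (twoValent k), hdeg (ItP k).G v = 3
  twoValent_injective : Function.Injective (twoValent k)
  dist_twoValent :
    ∀ a b, a ≠ b → (ItP k).G.dist (twoValent k a) (twoValent k b) + 1 = 4 ^ (k + 1)

namespace IsGoodIterate
variable {k : ℕ}

lemma mem_range_of_hdeg_eq_two (g : IsGoodIterate k) {v : (ItP k).V} (hv : hdeg (ItP k).G v = 2) :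
    v ∈ Set.range (twoValent k) := by
  by_contra h
  have := g.hdeg_of_notMem v h
  omega

lemma two_le_hdeg (g : IsGoodIterate k) (v : (ItP k).V) : 2 ≤ hdeg (ItP k).G v := by
  by_cases h : v ∈ Set.range (twoValent k)
  · obtain ⟨a, rfl⟩ := h
    exact (g.hdeg_twoValent a).ge
  · exact (g.hdeg_of_notMem v h).ge.trans' (by norm_num)

lemma hdeg_le_three (g : IsGoodIterate k) (v : (ItP k).V) : hdeg (ItP k).G v ≤ 3 := by
  by_cases h : v ∈ Set.range (twoValent k)
  · obtain ⟨a, rfl⟩ := h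
    exact (g.hdeg_twoValent a).le.trans (by norm_num)
  · exact (g.hdeg_of_notMem v h).le

lemma succ (g : IsGoodIterate k) : IsGoodIterate (k + 1) := by
  have := g.finite
  refine ⟨inferInstanceAs (Finite ((ItP k).V × Fin 9)), fun p q h => ?_,
    inflate_connected g.connected, fun a => hdeg_inflate_seven (g.hdeg_twoValent a).le,
    fun ⟨u, i⟩ hv => ?_, fun a b h => g.twoValent_injective (congrArg Prod.fst h),
    fun a b hab => ?_⟩
  · obtain ⟨h₁, h₂⟩ := Nat.pair_eq_pair.1 h
    exact Prod.ext (g.enc_injective h₁) (Fin.val_injective h₂)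
  · refine hdeg_inflate_eq_three g.enc_injective (g.two_le_hdeg u) (g.hdeg_le_three u)
      fun hi => g.hdeg_of_notMem u ?_
    rintro ⟨a, rfl⟩
    exact hv ⟨a, by rw [hi]; rfl⟩
  · change (inflate (ItP k).G (ItP k).enc).dist (twoValent k a, 7) (twoValent k b, 7) + 1 = _
    rw [inflate_dist_seven g.enc_injective g.connected g.hdeg_le_three
      (g.twoValent_injective.ne hab) (g.hdeg_twoValent a).le (g.hdeg_twoValent b).le,
      pow_succ, ← g.dist_twoValent a b hab]
    ring

end IsGoodIterate

lemma isGoodIterate_zero : IsGoodIterate 0 := by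
  refine ⟨inferInstanceAs (Finite (Fin 9)), Fin.val_injective, pgr_connected,
    fun a => ?_, fun v hv => ?_, fun a b => ?_, fun a b hab => ?_⟩
  · change hdeg Pgr ((![4, 6, 7] : Fin 3 → Fin 9) a) = 2
    rw [hdeg_pgr]
    revert a
    decide
  · have hports : ∀ i : Fin 9, i ∈ pgrPorts → ∃ a, (![4, 6, 7] : Fin 3 → Fin 9) a = i := by
      decide
    exact (hdeg_pgr v).trans (if_neg fun hp => hv (hports v hp))
  · change (![4, 6, 7] : Fin 3 → Fin 9) a = (![4, 6, 7] : Fin 3 → Fin 9) b → a = b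
    revert a b
    decide
  · change Pgr.dist ((![4, 6, 7] : Fin 3 → Fin 9) a) ((![4, 6, 7] : Fin 3 → Fin 9) b) + 1 = 4
    rw [pgr_dist_eq]
    revert a b
    decide

lemma isGoodIterate (k : ℕ) : IsGoodIterate k := by
  induction k with
  | zero => exact isGoodIterate_zero
  | succ k ih => exact ih.succ

/-- the minimum number of vertices of a path in `Pᵏ` connecting two
distinct 2-valent vertices equals `4^{k+1}`. -/
theorem stmt_6 (k : ℕ) :
    sInf { n : ℕ | ∃ w1 w2 : (ItP k).V,
      hdeg (ItP k).G w1 = 2 ∧ hdeg (ItP k).G w2 = 2 ∧ w1 ≠ w2 ∧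
      n = (ItP k).G.dist w1 w2 + 1 } = 4 ^ (k + 1) := by
  have g := isGoodIterate k
  suffices h : { n : ℕ | ∃ w1 w2 : (ItP k).V,
      hdeg (ItP k).G w1 = 2 ∧ hdeg (ItP k).G w2 = 2 ∧ w1 ≠ w2 ∧
      n = (ItP k).G.dist w1 w2 + 1 } = {4 ^ (k + 1)} by
    rw [h, csInf_singleton]
  ext n
  constructor
  · rintro ⟨w₁, w₂, h₁, h₂, hne, rfl⟩
    obtain ⟨a, rfl⟩ := g.mem_range_of_hdeg_eq_two h₁
    obtain ⟨b, rfl⟩ := g.mem_range_of_hdeg_eq_two h₂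
    exact g.dist_twoValent a b fun hab => hne (hab ▸ rfl)
  · rintro rfl
    exact ⟨twoValent k 0, twoValent k 1, g.hdeg_twoValent 0, g.hdeg_twoValent 1,
      g.twoValent_injective.ne (by decide), (g.dist_twoValent 0 1 (by decide)).symm⟩
end

section
/- Let G be a cubic graph with a minimal 3-edge cut E_0, and let M be an f-matching of G. Then |M ∩ E_0| ∈ {0, 1}. -/
open SimpleGraph

/-!
Let `A` be the component of `G - E₀` containing an end of some edge of `E₀`. Minimality of the
cut makes `E₀` exactly the set of edges leaving `A`, so summing degrees over `A` gives
`3 |A| ≡ |E₀| = 3 (mod 2)`: `|A|` is odd. If `E₀ ⊆ M`, then `A` is a union of components of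
`G - M`, all of even order, which is impossible. If exactly one edge `e` of `E₀` avoids `M`, then
`e` lies in a 2-connected component of `G - M`, so it is not a bridge of `G - M`; but
`G - M - e ≤ G - E₀`, where the ends of `e` are disconnected.
-/

namespace SimpleGraph

variable {W : Type*} {H : SimpleGraph W}

lemma Reachable.deleteEdges_singleton_or {a x : W} (h : H.Reachable a x) (y : W) :
    (H.deleteEdges {s(x, y)}).Reachable a x ∨ (H.deleteEdges {s(x, y)}).Reachable a y := by
  obtain ⟨p⟩ := h
  induction p with
  | nil => exact .inl .rfl
  | @cons a c x hac _ ih =>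
    by_cases he : s(a, c) = s(x, y)
    · rcases Sym2.eq_iff.1 he with ⟨rfl, -⟩ | ⟨rfl, -⟩
      · exact .inl .rfl
      · exact .inr .rfl
    · have hac' : (H.deleteEdges {s(x, y)}).Adj a c := (deleteEdges_adj).2 ⟨hac, he⟩
      exact ih.imp hac'.reachable.trans hac'.reachable.trans

lemma deleteEdges_sdiff_singleton_deleteEdges {F : Set (Sym2 W)} {e : Sym2 W} (he : e ∈ F) :
    (H.deleteEdges (F \ {e})).deleteEdges {e} = H.deleteEdges F := by
  rw [deleteEdges_deleteEdges, Set.sdiff_union_self,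
    Set.union_eq_self_of_subset_right (Set.singleton_subset_iff.2 he)]

lemma Reachable.deleteEdges_of_induce_compl {v : W} {e : Sym2 W} (hv : v ∈ e)
    {a b : ({v}ᶜ : Set W)} (h : (H.induce {v}ᶜ).Reachable a b) :
    (H.deleteEdges {e}).Reachable a b :=
  h.map
    { toFun := Subtype.val
      map_rel' := fun {u w} huw => (deleteEdges_adj).2 ⟨huw, fun he => by
        rcases Sym2.mem_iff.1 ((Set.mem_singleton_iff.1 he) ▸ hv) with h | h
        exacts [u.2 h.symm, w.2 h.symm]⟩ }

lemma ConnectedComponent.even_ncard_supp_of_le [Finite W] {K : SimpleGraph W} (hHK : H ≤ K)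
    (hH : ∀ c : H.ConnectedComponent, Even c.supp.ncard) (c : K.ConnectedComponent) :
    Even c.supp.ncard := by
  rw [← Nat.not_odd_iff_even, ← c.odd_oddComponents_ncard_subset_supp H hHK]
  have hH' (d : H.ConnectedComponent) : ¬Odd d.supp.ncard := Nat.not_odd_iff_even.2 (hH d)
  simp [hH']

open Finset in
lemma cast_sum_degree_eq_card_of_cut [Fintype W] [DecidableEq W] [DecidableRel H.Adj]
    (A : Finset W) (E : Finset (Sym2 W)) (hE : E ⊆ H.edgeFinset)
    (hcross : ∀ x y, H.Adj x y → (s(x, y) ∈ E ↔ (x ∈ A ↔ y ∉ A))) :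
    ((∑ v ∈ A, H.degree v : ℕ) : ZMod 2) = #E := by
  have hcount : ∑ v ∈ A, H.degree v = ∑ e ∈ H.edgeFinset, #{v ∈ A | v ∈ e} := by
    simp_rw [← card_incidenceFinset_eq_degree, incidenceFinset_eq_filter]
    exact sum_card_bipartiteAbove_eq_sum_card_bipartiteBelow (· ∈ ·)
  have hedge : ∀ e ∈ H.edgeFinset, (#{v ∈ A | v ∈ e} : ZMod 2) = if e ∈ E then 1 else 0 := by
    intro e he
    induction e with | h x y => ?_
    have hxy : H.Adj x y := mem_edgeFinset.1 he
    have hfilter : {v ∈ A | v ∈ s(x, y)} = A ∩ {x, y} := by ext; simp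
    rw [hfilter, if_congr (hcross x y hxy) rfl rfl]
    by_cases hx : x ∈ A <;> by_cases hy : y ∈ A <;>
      simp [hx, hy, hxy.ne, CharTwo.two_eq_zero]
  rw [hcount, Nat.cast_sum, sum_congr rfl hedge, sum_boole, filter_mem_eq_inter,
    inter_eq_right.2 hE]

end SimpleGraph

lemma IsCubic.degree_eq {V : Type*} {G : SimpleGraph V} [Fintype V] [DecidableRel G.Adj]
    (hG : IsCubic G) (v : V) : G.degree v = 3 := by
  rw [← card_neighborSet_eq_degree, ← Nat.card_eq_fintype_card, Nat.card_coe_set_eq]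
  exact hG v

lemma TwoConnected.reachable_deleteEdges {W : Type*} {H : SimpleGraph W} (hH : TwoConnected H)
    (x y : W) : (H.deleteEdges {s(x, y)}).Reachable x y := by
  obtain rfl | hxy := eq_or_ne x y
  · exact .rfl
  obtain ⟨w, hwx, hwy⟩ : ∃ w, w ≠ x ∧ w ≠ y := by
    by_contra! h
    have : Nat.card W ≤ 2 := calc
      Nat.card W = (Set.univ : Set W).ncard := (Set.ncard_univ W).symm
      _ ≤ ({x, y} : Set W).ncard :=
        Set.ncard_le_ncard (fun w _ => (em (w = x)).elim .inl fun hw => .inr (h w hw)) (by simp)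
      _ = 2 := Set.ncard_pair hxy
    linarith [hH.1]
  have hxw := (hH.2 y).preconnected ⟨x, hxy⟩ ⟨w, hwy⟩
  have hwy' := (hH.2 x).preconnected ⟨w, hwx⟩ ⟨y, hxy.symm⟩
  exact (hxw.deleteEdges_of_induce_compl (Sym2.mem_mk_right x y)).trans
    (hwy'.deleteEdges_of_induce_compl (Sym2.mem_mk_left x y))

lemma not_isBridge_of_forall_twoConnected {W : Type*} {H : SimpleGraph W}
    (hH : ∀ c : H.ConnectedComponent, TwoConnected (H.induce c.supp)) {x y : W}
    (hxy : H.Adj x y) : ¬H.IsBridge s(x, y) := by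
  set c := H.connectedComponentMk x
  have hy : y ∈ c.supp := ConnectedComponent.connectedComponentMk_eq_of_adj hxy.symm
  let x' : c.supp := ⟨x, rfl⟩
  let y' : c.supp := ⟨y, hy⟩
  let φ : (H.induce c.supp).deleteEdges {s(x', y')} →g H.deleteEdges {s(x, y)} :=
    { toFun := Subtype.val
      map_rel' := fun {u w} huw => by
        rw [deleteEdges_adj] at huw ⊢
        refine ⟨huw.1, fun he => huw.2 (Sym2.map.injective Subtype.val_injective ?_)⟩
        exact Set.mem_singleton_iff.1 he }
  rw [isBridge_iff, not_not]
  exact ((hH c).reachable_deleteEdges x' y').map φ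

namespace IsMinEdgeCut

variable {V : Type*} {G : SimpleGraph V} {E : Set (Sym2 V)} {x y : V}

lemma not_reachable (hE : IsMinEdgeCut G E) (he : s(x, y) ∈ E) :
    ¬(G.deleteEdges E).Reachable x y := by
  intro hxy
  have hK := hE.2.2 _ (Set.sdiff_singleton_ssubset.2 he)
  rw [← deleteEdges_sdiff_singleton_deleteEdges he] at hxy
  refine hE.2.1 ?_
  rw [← deleteEdges_sdiff_singleton_deleteEdges he]
  exact hK.connected_delete_edge_of_not_isBridge (by rwa [isBridge_iff, not_not])

lemma reachable_or (hE : IsMinEdgeCut G E) (he : s(x, y) ∈ E) (v : V) :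
    (G.deleteEdges E).Reachable v x ∨ (G.deleteEdges E).Reachable v y := by
  rw [← deleteEdges_sdiff_singleton_deleteEdges he]
  exact ((hE.2.2 _ (Set.sdiff_singleton_ssubset.2 he)).preconnected v x).deleteEdges_singleton_or y

lemma mem_iff_of_adj (hE : IsMinEdgeCut G E) (he : s(x, y) ∈ E) {u v : V} (huv : G.Adj u v) :
    s(u, v) ∈ E ↔ (u ∈ ((G.deleteEdges E).connectedComponentMk x).supp ↔
      v ∉ ((G.deleteEdges E).connectedComponentMk x).supp) := by
  simp only [ConnectedComponent.mem_supp_iff, ConnectedComponent.eq]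
  constructor
  · intro huvE
    have hnot := hE.not_reachable huvE
    refine ⟨fun hu hv => hnot (hu.trans hv.symm), fun hv => ?_⟩
    refine (hE.reachable_or he u).resolve_right fun hu => ?_
    exact (hE.reachable_or he v).elim hv fun hv' => hnot (hu.trans hv'.symm)
  · intro hcross
    by_contra huvE
    have hadj : (G.deleteEdges E).Adj u v := (deleteEdges_adj).2 ⟨huv, huvE⟩
    by_cases hu : (G.deleteEdges E).Reachable u x
    · exact hcross.1 hu (hadj.symm.reachable.trans hu)
    · exact hu (hcross.2 fun hv => hu (hadj.reachable.trans hv))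

lemma odd_ncard_supp [Fintype V] (hE : IsMinEdgeCut G E) (hG : IsCubic G) (hodd : Odd E.ncard)
    (he : s(x, y) ∈ E) : Odd ((G.deleteEdges E).connectedComponentMk x).supp.ncard := by
  classical
  set A := ((G.deleteEdges E).connectedComponentMk x).supp
  have h := cast_sum_degree_eq_card_of_cut A.toFinset E.toFinset
    (fun e he => mem_edgeFinset.2 (hE.1 (Set.mem_toFinset.1 he)))
    (fun u v huv => by simpa only [Set.mem_toFinset] using hE.mem_iff_of_adj he huv)
  simp only [hG.degree_eq, Finset.sum_const, smul_eq_mul, ← Set.ncard_eq_toFinset_card',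
    Nat.cast_mul, (ZMod.natCast_eq_one_iff_odd).2 hodd] at h
  rw [show ((3 : ℕ) : ZMod 2) = 1 from rfl, mul_one] at h
  exact (ZMod.natCast_eq_one_iff_odd).1 h

lemma ncard_sdiff_ne_one (hE : IsMinEdgeCut G E) {M : Set (Sym2 V)}
    (hM : ∀ x y, (G.deleteEdges M).Adj x y → ¬(G.deleteEdges M).IsBridge s(x, y)) :
    (E \ M).ncard ≠ 1 := by
  intro h
  obtain ⟨e, he⟩ := Set.ncard_eq_one.1 h
  induction e with | h x y => ?_
  have hxy : s(x, y) ∈ E \ M := he ▸ rfl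
  have hcover : E ⊆ M ∪ {s(x, y)} := fun f hf => by
    by_cases hfM : f ∈ M
    exacts [.inl hfM, .inr (he ▸ ⟨hf, hfM⟩)]
  have hreach := hM x y ((deleteEdges_adj).2 ⟨hE.1 hxy.1, hxy.2⟩)
  rw [isBridge_iff, not_not, deleteEdges_deleteEdges] at hreach
  exact hE.not_reachable hxy.1 (hreach.mono (deleteEdges_anti hcover))

end IsMinEdgeCut

/-- if `E₀` is a minimal 3-edge cut of a cubic graph `G` and `M` is an
`f`-matching of `G`, then `|M ∩ E₀| ∈ {0, 1}`. -/
theorem stmt_9 {V : Type} [Fintype V] (G : SimpleGraph V) (hG : IsCubic G)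
    (E0 : Set (Sym2 V)) (hE : IsMinEdgeCut G E0) (hcard : E0.ncard = 3)
    (M : Set (Sym2 V)) (hM : IsFMatching G M) :
    (M ∩ E0).ncard = 0 ∨ (M ∩ E0).ncard = 1 := by
  obtain ⟨-, hcomp⟩ := hM
  obtain ⟨e, he⟩ := Set.nonempty_of_ncard_ne_zero (s := E0) (by omega)
  induction e with | h x y => ?_
  have hsplit := Set.ncard_inter_add_ncard_sdiff_eq_ncard E0 M
  rw [Set.inter_comm] at hsplit
  have hne_one : (E0 \ M).ncard ≠ 1 :=
    hE.ncard_sdiff_ne_one fun _ _ => not_isBridge_of_forall_twoConnected fun c => (hcomp c).1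
  have hne_zero : (E0 \ M).ncard ≠ 0 := by
    intro h
    have hsub : E0 ⊆ M := Set.sdiff_eq_empty.1 ((Set.ncard_eq_zero (Set.toFinite _)).1 h)
    have hodd := hE.odd_ncard_supp hG (by rw [hcard]; decide) he
    exact Nat.not_even_iff_odd.2 hodd <|
      ConnectedComponent.even_ncard_supp_of_le (deleteEdges_anti hsub) (fun c => (hcomp c).2) _
  omega
end

section
/- Let G be a 2-connected cubic graph with a minimal 3-edge cut E_0 = {e_1, e_2, e_3} such that one component of G − E_0 is isomorphic to P = P_10 − z. Then for every f-matching M of G, the graph P − M (M restricted to edges of P) is connected. -/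
/-! Pull `M` back to `P`. If `P - M` were disconnected it would have a component `B` of odd
order, since `P` has nine vertices. The edges of `P` leaving `B` lie in `M`, so they form a
matching cut of `P`, and an exhaustive check shows that `B` then has at least two vertices, all
but one of which are 3-valent in `P`. A 3-valent vertex of `P` has all its `G`-neighbours in `P`
because `G` is cubic, so in `G - M` the image of `B` is left only through a single vertex.
The component of `G - M` containing it is 2-connected, hence equals the image of `B`, and it
has odd order, which an `f`-matching forbids. Minimality of `E₀` only serves to see that the
copy of `P` is an induced subgraph of `G`. -/

open SimpleGraph

section

variable {V W : Type*} {G : SimpleGraph V} {F : SimpleGraph W}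

theorem hdeg_eq_degree (v : V) [Fintype (G.neighborSet v)] : hdeg G v = G.degree v := by
  rw [hdeg, ← card_neighborSet_eq_degree, ← Nat.card_eq_fintype_card]
  exact (Nat.card_coe_set_eq _).symm

theorem IsCubic.finite_adj (hG : IsCubic G) (v : V) : {w | G.Adj v w}.Finite :=
  Set.finite_of_ncard_ne_zero (ne_of_eq_of_ne (hG v) three_ne_zero)

theorem IsMatchingSet.eq_of_mem {M : Set (Sym2 V)} (hM : IsMatchingSet G M) {e e' : Sym2 V}
    (he : e ∈ M) (he' : e' ∈ M) {v : V} (hv : v ∈ e) (hv' : v ∈ e') : e = e' := by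
  by_contra hne
  exact hM.2 e he e' he' hne v ⟨hv, hv'⟩

theorem IsMatchingSet.eq_of_adj_of_mem_supp_iff_not_mem {M : Set (Sym2 V)}
    (hM : IsMatchingSet G M) {f : W → V} (hf : Function.Injective f)
    (K : (F.deleteEdges (Sym2.map f ⁻¹' M)).ConnectedComponent) {i j k : W}
    (hij : F.Adj i j) (hik : F.Adj i k)
    (hj : i ∈ K.supp ↔ j ∉ K.supp) (hk : i ∈ K.supp ↔ k ∉ K.supp) : j = k := by
  have hcross : ∀ l, F.Adj i l → (i ∈ K.supp ↔ l ∉ K.supp) → s(f i, f l) ∈ M := by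
    intro l hil hl
    by_contra hil'
    have := K.mem_supp_congr_adj (deleteEdges_adj.2 ⟨hil, by simpa using hil'⟩)
    tauto
  exact hf (Sym2.congr_right.1 (hM.eq_of_mem (hcross j hij hj) (hcross k hik hk)
    (Sym2.mem_mk_left _ _) (Sym2.mem_mk_left _ _)))

theorem IsMinEdgeCut.not_reachable_of_mem {E : Set (Sym2 V)} (hE : IsMinEdgeCut G E) {x y : V}
    (hxy : s(x, y) ∈ E) : ¬(G.deleteEdges E).Reachable x y := by
  intro hr
  refine hE.2.1 ?_
  have hconn := hE.2.2 _ (Set.sdiff_singleton_ssubset.2 hxy)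
  obtain ⟨v⟩ := hconn.nonempty
  refine (connected_iff_exists_forall_reachable _).2 ⟨v, fun w => ?_⟩
  obtain ⟨p⟩ := hconn.preconnected v w
  induction p with
  | nil => rfl
  | @cons a b _ hab _ ih =>
    refine Reachable.trans ?_ ih
    rw [deleteEdges_adj] at hab
    by_cases habE : s(a, b) ∈ E
    · have : s(a, b) = s(x, y) := by_contra fun hne => hab.2 ⟨habE, hne⟩
      rcases Sym2.eq_iff.1 this with ⟨rfl, rfl⟩ | ⟨rfl, rfl⟩
      exacts [hr, hr.symm]
    · exact (deleteEdges_adj.2 ⟨hab.1, habE⟩).reachable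

theorem IsMinEdgeCut.induce_deleteEdges_supp {E : Set (Sym2 V)} (hE : IsMinEdgeCut G E)
    (c : (G.deleteEdges E).ConnectedComponent) :
    (G.deleteEdges E).induce c.supp = G.induce c.supp := by
  ext x y
  simp only [comap_adj, Function.Embedding.subtype_apply, deleteEdges_adj, and_iff_left_iff_imp]
  exact fun _ hxy => hE.not_reachable_of_mem hxy (c.reachable_of_mem_supp x.2 y.2)

namespace SimpleGraph

theorem Reachable.mem_of_forall_adj_mem {s : Set V} (hs : ∀ x ∈ s, ∀ y, G.Adj x y → y ∈ s)
    {u v : V} (h : G.Reachable u v) (hu : u ∈ s) : v ∈ s := by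
  rw [reachable_iff_reflTransGen] at h
  induction h with
  | refl => exact hu
  | tail _ hab ih => exact hs _ ih _ hab

theorem Embedding.mem_range_of_adj (f : F ↪g G) {i : W} (hfin : {w | G.Adj (f i) w}.Finite)
    (hle : hdeg G (f i) ≤ hdeg F i) {y : V} (hy : G.Adj (f i) y) : y ∈ Set.range f := by
  have hsub : f '' {j | F.Adj i j} ⊆ {w | G.Adj (f i) w} := by
    rintro _ ⟨j, hj, rfl⟩
    exact f.map_adj_iff.2 hj
  have hnbr := Set.eq_of_subset_of_ncard_le hsub
    (by rwa [Set.ncard_image_of_injective _ f.injective]) hfin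
  obtain ⟨j, -, rfl⟩ : y ∈ f '' {j | F.Adj i j} := hnbr ▸ hy
  exact Set.mem_range_self j

noncomputable def Embedding.deleteEdgesIsoInduceRange (f : F ↪g G) (M : Set (Sym2 V)) :
    F.deleteEdges (Sym2.map f ⁻¹' M) ≃g (G.deleteEdges M).induce (Set.range f) where
  toEquiv := Equiv.ofInjective f f.injective
  map_rel_iff' := by simp

theorem connectedComponentMk_supp_eq_of_forall_adj_mem {H : SimpleGraph V}
    (hH : ∀ K : H.ConnectedComponent, TwoConnected (H.induce K.supp))
    {S : Set V} {u v : V} (hu : u ∈ S) (hv : v ∈ S) (huv : u ≠ v)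
    (hconn : ∀ x ∈ S, H.Reachable u x) (hS : ∀ x ∈ S, x ≠ v → ∀ y, H.Adj x y → y ∈ S) :
    (H.connectedComponentMk u).supp = S := by
  set K := H.connectedComponentMk u
  refine subset_antisymm (fun y hy => ?_) (fun x hx => (ConnectedComponent.sound (hconn x hx)).symm)
  obtain rfl | hyv := eq_or_ne y v
  · exact hv
  let v' : K.supp := ⟨v, (ConnectedComponent.sound (hconn v hv)).symm⟩
  have hKv : ((H.induce K.supp).induce {v'}ᶜ).Connected := (hH K).2 v'
  have hr := hKv.preconnected ⟨⟨u, ConnectedComponent.connectedComponentMk_mem⟩,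
    fun h => huv (congrArg Subtype.val h)⟩ ⟨⟨y, hy⟩, fun h => hyv (congrArg Subtype.val h)⟩
  exact hr.mem_of_forall_adj_mem (s := {z : ({v'}ᶜ : Set K.supp) | ((z : K.supp) : V) ∈ S})
    (fun x hx z hxz => hS _ hx (fun h => x.2 (Subtype.ext h)) _ hxz) hu

end SimpleGraph

end

instance inst_s10 : DecidableRel Pgr.Adj := fun i j => decidable_of_iff' _ (fromRel_adj _ i j)

set_option synthInstance.maxSize 1024 in
/-- Checked over all vertex sets of `P`: the only such `B` other than `univ` are the six
pentagons of `P`, each containing exactly one 2-valent vertex. -/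
theorem pgr_eq_univ_or_of_odd_cut (B : Finset (Fin 9))
    (hcut : ∀ i j k, Pgr.Adj i j → Pgr.Adj i k → (i ∈ B ↔ j ∉ B) → (i ∈ B ↔ k ∉ B) → j = k)
    (hodd : Odd B.card) :
    B = Finset.univ ∨ ∃ u ∈ B, ∃ v ∈ B, u ≠ v ∧ ∀ i ∈ B, i ≠ v → Pgr.degree i = 3 := by
  revert B
  decide +kernel

theorem pgr_deleteEdges_connected {V : Type*} {G : SimpleGraph V} {M : Set (Sym2 V)}
    (hG : IsCubic G) (hM : IsFMatching G M) (f : Pgr ↪g G) :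
    (Pgr.deleteEdges (Sym2.map f ⁻¹' M)).Connected := by
  classical
  set Q := Pgr.deleteEdges (Sym2.map f ⁻¹' M)
  obtain ⟨B, hB⟩ : ∃ B : Q.ConnectedComponent, Odd B.supp.ncard :=
    Set.nonempty_of_ncard_ne_zero ((odd_ncard_oddComponents Q).2 (by simp; decide)).pos.ne'
  have hBf : (↑(Finset.univ.filter (· ∈ B.supp)) : Set (Fin 9)) = B.supp :=
    Set.ext fun _ => by simp
  rcases pgr_eq_univ_or_of_odd_cut (Finset.univ.filter (· ∈ B.supp))
      (fun i j k hij hik hj hk => hM.1.eq_of_adj_of_mem_supp_iff_not_mem f.injective B hij hik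
        (by simpa using hj) (by simpa using hk))
      (by rwa [← Set.ncard_coe_finset, hBf]) with huniv | ⟨u, hu, v, hv, huv, hdeg3⟩
  · obtain ⟨w, hw⟩ := B.nonempty_supp
    refine (connected_iff_exists_forall_reachable Q).2 ⟨w, fun x => B.reachable_of_mem_supp hw ?_⟩
    simpa using Finset.ext_iff.1 huniv x
  exfalso
  set H := G.deleteEdges M
  simp only [Finset.mem_filter, Finset.mem_univ, true_and] at hu hv hdeg3
  let φ : Q →g H :=
    (Embedding.induce (Set.range f)).toHom.comp (f.deleteEdgesIsoInduceRange M).toHom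
  have hreach : ∀ x ∈ f '' B.supp, H.Reachable (f u) x := by
    rintro _ ⟨j, hj, rfl⟩
    exact (B.reachable_of_mem_supp hu hj).map φ
  have hclosed : ∀ x ∈ f '' B.supp, x ≠ f v → ∀ y, H.Adj x y → y ∈ f '' B.supp := by
    rintro _ ⟨i, hi, rfl⟩ hiv y hy
    rw [deleteEdges_adj] at hy
    have hi3 : Pgr.degree i = 3 := hdeg3 i hi (fun h => hiv (h ▸ rfl))
    obtain ⟨j, rfl⟩ := f.mem_range_of_adj (hG.finite_adj _)
      (by rw [hG, hdeg_eq_degree, hi3]) hy.1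
    exact ⟨j, B.mem_supp_of_adj_mem_supp hi
      (deleteEdges_adj.2 ⟨f.map_adj_iff.1 hy.1, by simpa using hy.2⟩), rfl⟩
  have hcomp := connectedComponentMk_supp_eq_of_forall_adj_mem (fun K => (hM.2 K).1)
    (Set.mem_image_of_mem f hu) (Set.mem_image_of_mem f hv) (f.injective.ne huv) hreach hclosed
  have heven := (hM.2 (H.connectedComponentMk (f u))).2
  rw [hcomp, Set.ncard_image_of_injective _ f.injective] at heven
  exact Nat.not_even_iff_odd.2 hB heven

theorem stmt_10_general {V : Type} (G : SimpleGraph V) (hG : IsCubic G)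
    (E0 : Set (Sym2 V)) (hE : IsMinEdgeCut G E0)
    (c : (G.deleteEdges E0).ConnectedComponent)
    (hiso : Nonempty (((G.deleteEdges E0).induce c.supp) ≃g Pgr))
    (M : Set (Sym2 V)) (hM : IsFMatching G M) :
    ((G.deleteEdges M).induce c.supp).Connected := by
  obtain ⟨e⟩ := hiso
  rw [hE.induce_deleteEdges_supp] at e
  let f : Pgr ↪g G := (Embedding.induce c.supp).comp e.symm.toEmbedding
  have hrange : Set.range f = c.supp := by
    rw [show ⇑f = Subtype.val ∘ e.symm from rfl, Set.range_comp, e.symm.surjective.range_eq,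
      Set.image_univ, Subtype.range_coe]
  rw [← hrange]
  exact (f.deleteEdgesIsoInduceRange M).connected_iff.1 (pgr_deleteEdges_connected hG hM f)

/-- if one side of a minimal 3-edge cut `E₀` of a 2-connected cubic
graph `G` is a copy of `P = P₁₀ - z`, then for every `f`-matching `M` of `G` the
graph `P - M` is connected. -/
theorem stmt_10 {V : Type} [Fintype V] (G : SimpleGraph V) (hG : IsCubic G)
    (h2 : TwoConnected G) (E0 : Set (Sym2 V)) (hE : IsMinEdgeCut G E0)
    (hcard : E0.ncard = 3) (c : (G.deleteEdges E0).ConnectedComponent)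
    (hiso : Nonempty (((G.deleteEdges E0).induce c.supp) ≃g Pgr))
    (M : Set (Sym2 V)) (hM : IsFMatching G M) :
    ((G.deleteEdges M).induce c.supp).Connected :=
  stmt_10_general G hG E0 hE c hiso M hM
end
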